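/- arXiv:1902.10142 — 2 statements merged into one kernel-verified Lean document; each statement's English description precedes it below -/
import Mathlib

section
/- Let Y ~ q, X ~ p, and U₀, U₁ i.i.d. uniform on [0,1], all mutually independent. If P( (X,U₁) <_lex (Y,U₀) ) ≠ 1/2, where <_lex denotes the lexicographic order on T × [0,1] induced by (T, ≺) and ([0,1], <), then for every integer m ≥ 1 the stochastic rank statistic R computed with m resampled points is not uniformly distributed on {0,1,…,m}. -/
open MeasureTheory ProbabilityTheory
open scoped ENNReal

noncomputable section

/-- The uniform distribution on the interval `[0,1]`. -/
def unifIcc : Measure ℝ := volume.restrict (Set.Icc 0 1)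

/-- The setup of the stochastic rank statistic: on a common probability space `(Ω, μ)`,
`X 0` has distribution `q`, the `X i` for `i ≠ 0` have distribution `p`, the `U i` are
uniform on `[0,1]`, and all of `X 0, …, X m, U 0, …, U m` are mutually independent.
(Mutual independence of the `2(m+1)` variables is recorded by independence of the pairs
`(X i, U i)` together with each pair having the product law.) -/
def IsRankSetup {T : Type} [MeasurableSpace T] {Ω : Type} [MeasurableSpace Ω]
    (μ : Measure Ω) (p q : Measure T) (m : ℕ)
    (X : Fin (m + 1) → Ω → T) (U : Fin (m + 1) → Ω → ℝ) : Prop :=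
  (∀ i, Measurable (X i)) ∧ (∀ i, Measurable (U i)) ∧
  iIndepFun (fun i ω => (X i ω, U i ω)) μ ∧
  μ.map (fun ω => (X 0 ω, U 0 ω)) = q.prod unifIcc ∧
  ∀ i : Fin (m + 1), i ≠ 0 → μ.map (fun ω => (X i ω, U i ω)) = p.prod unifIcc

open scoped Classical in
/-- The stochastic rank statistic
`R = ∑_{j=1}^m (1[X j ≺ X 0] + 1[X j = X 0 ∧ U j < U 0])`. -/
def rankStat {T : Type} {Ω : Type} (r : T → T → Prop) (m : ℕ)
    (X : Fin (m + 1) → Ω → T) (U : Fin (m + 1) → Ω → ℝ) (ω : Ω) : ℕ :=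
  ∑ j : Fin m, ((if r (X j.succ ω) (X 0 ω) then 1 else 0) +
    (if X j.succ ω = X 0 ω ∧ U j.succ ω < U 0 ω then 1 else 0))

/-!
By independence, each pair `((X j, U j), (X 0, U 0))` with `j ≠ 0` has law
`(p ⊗ unif) ⊗ (q ⊗ unif)`, and since `≺` is irreflexive, `R` counts the `j` with
`(X j, U j) <_lex (X 0, U 0)`. Linearity of expectation gives `E R = m θ`, where `θ` is the
lexicographic probability, while a rank uniform on `{0, …, m}` has mean `m / 2`; hence `θ = 1/2`.
-/

open Finset

section CountingEvents

variable {Ω ι : Type*} [MeasurableSpace Ω]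

open scoped Classical in
theorem measurable_card_filter_mem {E : ι → Set Ω} (hE : ∀ i, MeasurableSet (E i))
    (s : Finset ι) : Measurable fun ω => #{i ∈ s | ω ∈ E i} := by
  simp_rw [card_filter]
  exact Finset.measurable_sum _ fun i _ => Measurable.ite (hE i) measurable_const measurable_const

open scoped Classical in
theorem lintegral_card_filter_mem (μ : Measure Ω) {E : ι → Set Ω}
    (hE : ∀ i, MeasurableSet (E i)) (s : Finset ι) :
    ∫⁻ ω, (#{i ∈ s | ω ∈ E i} : ℝ≥0∞) ∂μ = ∑ i ∈ s, μ (E i) := by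
  have hpt : ∀ ω, (#{i ∈ s | ω ∈ E i} : ℝ≥0∞) = ∑ i ∈ s, (E i).indicator 1 ω := fun ω => by
    simp [Set.indicator_apply, Finset.sum_boole]
  simp_rw [hpt]
  rw [lintegral_finsetSum _ fun i _ => measurable_one.indicator (hE i)]
  exact sum_congr rfl fun i _ => lintegral_indicator_one (hE i)

theorem lintegral_natCast_eq_sum_range (μ : Measure Ω) {f : Ω → ℕ} (hf : Measurable f)
    {m : ℕ} (hle : ∀ ω, f ω ≤ m) :
    ∫⁻ ω, (f ω : ℝ≥0∞) ∂μ = ∑ k ∈ range (m + 1), k * μ (f ⁻¹' {k}) := by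
  have hpt : ∀ ω, (f ω : ℝ≥0∞) =
      ∑ k ∈ range (m + 1), (f ⁻¹' {k}).indicator (fun _ => (k : ℝ≥0∞)) ω := fun ω => by
    classical
    simp [Set.indicator_apply, Nat.lt_succ_of_le (hle ω)]
  simp_rw [hpt]
  rw [lintegral_finsetSum _ fun k _ => measurable_const.indicator (hf (measurableSet_singleton k))]
  exact sum_congr rfl fun k _ => lintegral_indicator_const (hf (measurableSet_singleton k)) _

theorem two_mul_lintegral_eq_of_uniform (μ : Measure Ω) {f : Ω → ℕ} (hf : Measurable f)
    {m : ℕ} (hle : ∀ ω, f ω ≤ m) (hunif : ∀ k ≤ m, μ (f ⁻¹' {k}) = ((m : ℝ≥0∞) + 1)⁻¹) :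
    2 * ∫⁻ ω, (f ω : ℝ≥0∞) ∂μ = m := by
  have hgauss : ((∑ k ∈ range (m + 1), k : ℕ) : ℝ≥0∞) * 2 = ((m : ℝ≥0∞) + 1) * m := by
    exact_mod_cast sum_range_id_mul_two (m + 1)
  have hm1 : ((m : ℝ≥0∞) + 1) * ((m : ℝ≥0∞) + 1)⁻¹ = 1 :=
    ENNReal.mul_inv_cancel (by simp) (by simp)
  rw [lintegral_natCast_eq_sum_range μ hf hle,
    sum_congr rfl fun k hk => by rw [hunif k (Nat.lt_succ_iff.mp (mem_range.mp hk))],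
    ← sum_mul]
  calc 2 * ((∑ k ∈ range (m + 1), (k : ℝ≥0∞)) * ((m : ℝ≥0∞) + 1)⁻¹)
      = ((∑ k ∈ range (m + 1), k : ℕ) : ℝ≥0∞) * 2 * ((m : ℝ≥0∞) + 1)⁻¹ := by push_cast; ring
    _ = m := by rw [hgauss, mul_comm _ (m : ℝ≥0∞), mul_assoc, hm1, mul_one]

end CountingEvents

section RankStatistic

variable {T Ω : Type}

def lexLTSet (r : T → T → Prop) : Set ((T × ℝ) × (T × ℝ)) :=
  {z | r z.1.1 z.2.1 ∨ (z.1.1 = z.2.1 ∧ z.1.2 < z.2.2)}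

open scoped Classical in
/-- For irreflexive `r` the two indicators in `rankStat` never fire together. -/
theorem rankStat_eq_card (r : T → T → Prop) [Std.Irrefl r] (m : ℕ)
    (X : Fin (m + 1) → Ω → T) (U : Fin (m + 1) → Ω → ℝ) (ω : Ω) :
    rankStat r m X U ω =
      #{j : Fin m | ((X j.succ ω, U j.succ ω), (X 0 ω, U 0 ω)) ∈ lexLTSet r} := by
  rw [rankStat, card_filter]
  refine sum_congr rfl fun j _ => ?_
  by_cases hlt : r (X j.succ ω) (X 0 ω)
  · have heq : X j.succ ω ≠ X 0 ω := fun h => irrefl_of r _ (h ▸ hlt)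
    simp [lexLTSet, hlt, heq]
  · simp [lexLTSet, hlt]

open scoped Classical in
theorem rankStat_le (r : T → T → Prop) [Std.Irrefl r] (m : ℕ) (X : Fin (m + 1) → Ω → T)
    (U : Fin (m + 1) → Ω → ℝ) (ω : Ω) : rankStat r m X U ω ≤ m := by
  rw [rankStat_eq_card]
  exact (card_filter_le _ _).trans (by simp)

variable [MeasurableSpace T] [MeasurableSpace Ω]

theorem measurableSet_lexLTSet [Countable T] [MeasurableSingletonClass T] (r : T → T → Prop) :
    MeasurableSet (lexLTSet r) := by
  have hfst : Measurable fun z : (T × ℝ) × (T × ℝ) => (z.1.1, z.2.1) := by fun_prop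
  have hr : MeasurableSet {z : (T × ℝ) × (T × ℝ) | r z.1.1 z.2.1} :=
    hfst (MeasurableSet.of_discrete (s := {a : T × T | r a.1 a.2}))
  have hdiag : MeasurableSet {z : (T × ℝ) × (T × ℝ) | z.1.1 = z.2.1} :=
    hfst (MeasurableSet.of_discrete (s := {a : T × T | a.1 = a.2}))
  exact hr.union (hdiag.inter (measurableSet_lt (measurable_snd.comp measurable_fst)
    (measurable_snd.comp measurable_snd)))

namespace IsRankSetup

variable {p q : Measure T} {μ : Measure Ω} {m : ℕ} {X : Fin (m + 1) → Ω → T}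
  {U : Fin (m + 1) → Ω → ℝ}

theorem measurable_pair (h : IsRankSetup μ p q m X U) (i : Fin (m + 1)) :
    Measurable fun ω => (X i ω, U i ω) :=
  (h.1 i).prodMk (h.2.1 i)

theorem map_pair_zero [IsFiniteMeasure μ] (h : IsRankSetup μ p q m X U) {i : Fin (m + 1)}
    (hi : i ≠ 0) :
    μ.map (fun ω => ((X i ω, U i ω), (X 0 ω, U 0 ω))) = (p.prod unifIcc).prod (q.prod unifIcc) := by
  rw [(indepFun_iff_map_prod_eq_prod_map_map (h.measurable_pair i).aemeasurable
    (h.measurable_pair 0).aemeasurable).mp (h.2.2.1.indepFun hi), h.2.2.2.2 i hi, h.2.2.2.1]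

variable [Countable T] [MeasurableSingletonClass T] (r : T → T → Prop) [Std.Irrefl r]

theorem measurable_rankStat (h : IsRankSetup μ p q m X U) : Measurable (rankStat r m X U) := by
  simp_rw [funext (rankStat_eq_card r m X U)]
  exact measurable_card_filter_mem (fun j : Fin m =>
    (h.measurable_pair j.succ).prodMk (h.measurable_pair 0) (measurableSet_lexLTSet r)) _

theorem lintegral_rankStat [IsFiniteMeasure μ] (h : IsRankSetup μ p q m X U) :
    ∫⁻ ω, (rankStat r m X U ω : ℝ≥0∞) ∂μ =
      m * (p.prod unifIcc).prod (q.prod unifIcc) (lexLTSet r) := by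
  have hpair (j : Fin m) := (h.measurable_pair j.succ).prodMk (h.measurable_pair 0)
  simp_rw [rankStat_eq_card r m X U]
  refine (lintegral_card_filter_mem μ (fun j => hpair j (measurableSet_lexLTSet r)) _).trans ?_
  simp_rw [← Measure.map_apply (hpair _) (measurableSet_lexLTSet r),
    h.map_pair_zero (Fin.succ_ne_zero _)]
  simp

end IsRankSetup

end RankStatistic

theorem srs_nonuniform_of_lex_asymmetry_general
    {T : Type} [Countable T] [MeasurableSpace T] [MeasurableSingletonClass T]
    (r : T → T → Prop) (hr : IsStrictTotalOrder T r) (p q : PMF T)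
    (hlex :
      ((p.toMeasure.prod unifIcc).prod (q.toMeasure.prod unifIcc))
        {z : (T × ℝ) × (T × ℝ) |
          r z.1.1 z.2.1 ∨ (z.1.1 = z.2.1 ∧ z.1.2 < z.2.2)} ≠ 2⁻¹) :
    ∀ m : ℕ, 1 ≤ m →
      ∀ (Ω : Type) (_ : MeasurableSpace Ω) (μ : Measure Ω), IsProbabilityMeasure μ →
        ∀ (X : Fin (m + 1) → Ω → T) (U : Fin (m + 1) → Ω → ℝ),
          IsRankSetup μ p.toMeasure q.toMeasure m X U →
          ¬ (∀ k : ℕ, k ≤ m →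
              μ {ω | rankStat r m X U ω = k} = ((m : ℝ≥0∞) + 1)⁻¹) := by
  intro m hm Ω _ μ _ X U hsetup hunif
  set θ := (p.toMeasure.prod unifIcc).prod (q.toMeasure.prod unifIcc) (lexLTSet r)
  have hmean : 2 * (m * θ) = m := by
    rw [← hsetup.lintegral_rankStat r]
    exact two_mul_lintegral_eq_of_uniform μ (hsetup.measurable_rankStat r) (rankStat_le r m X U)
      hunif
  have hm0 : (m : ℝ≥0∞) ≠ 0 := by exact_mod_cast (Nat.one_le_iff_ne_zero.mp hm)
  have hθ : θ * 2 = 1 := by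
    rw [← ENNReal.mul_right_inj hm0 (ENNReal.natCast_ne_top m), mul_one]
    convert hmean using 1
    ring
  exact hlex (ENNReal.eq_inv_of_mul_eq_one_left hθ)

/-- **Corollary (no adversarial symmetry).** Let `Y ~ q`, `X ~ p`, and `U₀, U₁` be
i.i.d. uniform on `[0,1]`, all mutually independent (so that the joint law of
`((X, U₁), (Y, U₀))` is the product measure `(p ⊗ unif) ⊗ (q ⊗ unif)`).  If
`P((X, U₁) <_lex (Y, U₀)) ≠ 1/2`, where `<_lex` is the lexicographic order on `T × [0,1]`
induced by `(T, ≺)` and `([0,1], <)`, then for every `m ≥ 1` the stochastic rank statistic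
is not uniformly distributed on `{0, …, m}`. -/
theorem srs_nonuniform_of_lex_asymmetry
    {T : Type} [Countable T] [Nonempty T] [MeasurableSpace T] [MeasurableSingletonClass T]
    (r : T → T → Prop) (hr : IsStrictTotalOrder T r) (p q : PMF T)
    (hlex :
      ((p.toMeasure.prod unifIcc).prod (q.toMeasure.prod unifIcc))
        {z : (T × ℝ) × (T × ℝ) |
          r z.1.1 z.2.1 ∨ (z.1.1 = z.2.1 ∧ z.1.2 < z.2.2)} ≠ 2⁻¹) :
    ∀ m : ℕ, 1 ≤ m →
      ∀ (Ω : Type) (_ : MeasurableSpace Ω) (μ : Measure Ω), IsProbabilityMeasure μ →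
        ∀ (X : Fin (m + 1) → Ω → T) (U : Fin (m + 1) → Ω → ℝ),
          IsRankSetup μ p.toMeasure q.toMeasure m X U →
          ¬ (∀ k : ℕ, k ≤ m →
              μ {ω | rankStat r m X U ω = k} = ((m : ℝ≥0∞) + 1)⁻¹) :=
  srs_nonuniform_of_lex_asymmetry_general r hr p q hlex

end
end

section
/- Suppose p ≠ q, let h(x) := q(x) − p(x), and let ≺ be any strict total order on T such that h(x) > h(x') implies x ≺ x' (and h(x) < h(x') implies x' ≺ x). Then for m = 1, the stochastic rank statistic satisfies P(R = 0) > 1/2; equivalently, P( (X₀,U₀) <_lex (X₁,U₁) ) > 1/2. -/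
open MeasureTheory ProbabilityTheory
open scoped ENNReal

noncomputable section

/-!
Write `G a = p {b | a ≺ b} + p {a} / 2`. Conditioning on `X₀` and integrating out the uniform
tie-breakers gives `P(R = 0) = ∑ₐ q a * G a`, and the same sum with `q` replaced by `p` equals `1/2`
because swapping `(X₀, U₀)` and `(X₁, U₁)` is then measure preserving. Hence
`P(R = 0) - 1/2 = ∑ₐ h a * G a` with `∑ₐ h a = 0`. Every point where `h > 0` precedes every point
where `h < 0`, and `G` drops by at least `(p a + p b) / 2` from `a` to any `b ≻ a`; so a threshold
`c` lying between the values of `G` on the two sets gives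
`∑ h G = ∑ h (G - c) ≥ ∑ |h| p / 2`, which is positive since `p > q ≥ 0` wherever `h < 0`.
-/

section Threshold

variable {ι : Type*} {h g w : ι → ℝ}

theorem exists_neg_of_tsum_eq_zero (hs : Summable h) (h0 : ∑' i, h i = 0) {i : ι}
    (hi : 0 < h i) : ∃ j, h j < 0 := by
  by_contra! hnonneg
  linarith [hs.le_tsum i fun j _ => hnonneg j]

theorem tsum_abs_mul_le_tsum_mul_of_separated (hs : Summable h) (h0 : ∑' i, h i = 0)
    (hhg : Summable fun i => h i * g i) (hhw : Summable fun i => |h i| * w i)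
    (hsep : ∀ i j, 0 < h i → h j < 0 → w i + w j ≤ g i - g j) :
    ∑' i, |h i| * w i ≤ ∑' i, h i * g i := by
  set c := sInf ((fun i => g i - w i) '' {i | 0 < h i})
  have hpoint : ∀ i, |h i| * w i ≤ h i * g i - c * h i := by
    intro i
    rcases lt_trichotomy (h i) 0 with hi | hi | hi
    · obtain ⟨k, hk⟩ : ∃ k, 0 < h k := by
        simpa using exists_neg_of_tsum_eq_zero hs.neg (by rw [tsum_neg, h0, neg_zero])
          (neg_pos.2 hi)
      have hc : g i + w i ≤ c := le_csInf ⟨_, k, hk, rfl⟩ <| by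
        rintro _ ⟨k, hk, rfl⟩
        linarith [hsep k i hk hi]
      rw [abs_of_neg hi]
      nlinarith
    · simp [hi]
    · obtain ⟨j, hj⟩ := exists_neg_of_tsum_eq_zero hs h0 hi
      have hc : c ≤ g i - w i := csInf_le ⟨g j + w j, by
        rintro _ ⟨k, hk, rfl⟩
        linarith [hsep k j hk hj]⟩ ⟨i, hi, rfl⟩
      rw [abs_of_pos hi]
      nlinarith
  calc ∑' i, |h i| * w i ≤ ∑' i, (h i * g i - c * h i) :=
        hhw.tsum_le_tsum hpoint (hhg.sub (hs.mul_left c))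
    _ = ∑' i, h i * g i := by
        rw [hhg.tsum_sub (hs.mul_left c), tsum_mul_left, h0, mul_zero, sub_zero]

theorem tsum_mul_lt_tsum_mul_of_separated {P Q : ι → ℝ} {C : ℝ} (hP : Summable P)
    (hQ : Summable Q) (hP0 : ∀ i, 0 ≤ P i) (hQ0 : ∀ i, 0 ≤ Q i)
    (hsum : ∑' i, P i = ∑' i, Q i) (hne : P ≠ Q) (hg : ∀ i, |g i| ≤ C)
    (hsep : ∀ i j, P i < Q i → Q j < P j → P i / 2 + P j / 2 ≤ g i - g j) :
    ∑' i, P i * g i < ∑' i, Q i * g i := by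
  have hmul : ∀ {R : ι → ℝ}, Summable R → (∀ i, 0 ≤ R i) → Summable fun i => R i * g i :=
    fun hR hR0 => hR.mul_right C |>.of_norm_bounded fun i => by
      rw [norm_mul, Real.norm_of_nonneg (hR0 i), Real.norm_eq_abs]
      exact mul_le_mul_of_nonneg_left (hg i) (hR0 i)
  have hh : Summable fun i => Q i - P i := hQ.sub hP
  have hh0 : ∑' i, (Q i - P i) = 0 := by rw [hQ.tsum_sub hP, hsum, sub_self]
  have hw0 : ∀ i, 0 ≤ |Q i - P i| * (P i / 2) := fun i => by have := hP0 i; positivity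
  have hhw : Summable fun i => |Q i - P i| * (P i / 2) :=
    (hh.abs.mul_right (∑' j, P j)).of_nonneg_of_le (fun i => hw0 i) fun i =>
      mul_le_mul_of_nonneg_left (by linarith [hP.le_tsum i fun j _ => hP0 j, hP0 i]) (abs_nonneg _)
  obtain ⟨b, hb⟩ : ∃ b, Q b - P b < 0 := by
    obtain ⟨a, ha⟩ := Function.ne_iff.1 hne
    rcases (sub_ne_zero.2 ha.symm).lt_or_gt with ha | ha
    · exact ⟨a, ha⟩
    · exact exists_neg_of_tsum_eq_zero hh hh0 ha
  have hpos : 0 < ∑' i, |Q i - P i| * (P i / 2) :=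
    hhw.tsum_pos hw0 b (mul_pos (abs_pos.2 hb.ne) (by linarith [hQ0 b]))
  have hgap := tsum_abs_mul_le_tsum_mul_of_separated hh hh0
    (((hmul hQ hQ0).sub (hmul hP hP0)).congr fun i => by ring) hhw
    fun i j hi hj => hsep i j (sub_pos.1 hi) (sub_neg.1 hj)
  have hdiff : ∑' i, (Q i - P i) * g i = ∑' i, Q i * g i - ∑' i, P i * g i := by
    rw [← (hmul hQ hQ0).tsum_sub (hmul hP hP0)]
    exact tsum_congr fun i => sub_mul _ _ _
  linarith

end Threshold

section ProdSelf

variable {α : Type*} [MeasurableSpace α]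

theorem prod_self_setOf_add_prod_self_setOf_not_swap (μ : Measure α) [IsProbabilityMeasure μ]
    {r : α → α → Prop} (hr : MeasurableSet {z : α × α | r z.1 z.2}) :
    μ.prod μ {z | r z.1 z.2} + μ.prod μ {z | ¬ r z.2 z.1} = 1 := by
  have hswap : μ.prod μ {z | r z.2 z.1} = μ.prod μ {z | r z.1 z.2} := by
    conv_rhs => rw [← Measure.prod_swap]
    rw [Measure.map_apply measurable_swap hr]
    rfl
  rw [← hswap, ← measure_univ (μ := μ.prod μ)]
  exact measure_add_measure_compl (measurable_swap hr)

theorem prod_self_diagonal_eq_zero [MeasurableEq α] (μ : Measure α) [SFinite μ]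
    [NullSingletonClass μ] : μ.prod μ (Set.diagonal α) = 0 := by
  rw [Measure.prod_apply measurableSet_diagonal]
  simp [Set.preimage, Set.diagonal]

theorem prod_self_setOf_le_eq_half (μ : Measure ℝ) [IsProbabilityMeasure μ]
    [NullSingletonClass μ] : μ.prod μ {z | z.1 ≤ z.2} = 2⁻¹ := by
  have hlt : μ.prod μ {z : ℝ × ℝ | z.1 < z.2} = μ.prod μ {z | z.1 ≤ z.2} := by
    refine le_antisymm (measure_mono fun z (hz : z.1 < z.2) => hz.le) ?_
    calc μ.prod μ {z : ℝ × ℝ | z.1 ≤ z.2}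
        ≤ μ.prod μ ({z | z.1 < z.2} ∪ Set.diagonal ℝ) :=
          measure_mono fun z (hz : z.1 ≤ z.2) => hz.lt_or_eq
      _ ≤ μ.prod μ {z | z.1 < z.2} := by
        simpa [prod_self_diagonal_eq_zero μ] using
          measure_union_le (μ := μ.prod μ) {z : ℝ × ℝ | z.1 < z.2} (Set.diagonal ℝ)
  have htotal :=
    prod_self_setOf_add_prod_self_setOf_not_swap μ (measurableSet_lt measurable_fst measurable_snd)
  simp only [not_lt, hlt] at htotal
  exact ENNReal.eq_inv_of_mul_eq_one_left (by rwa [mul_two])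

end ProdSelf

theorem disjoint_setOf_rel_diagonal {α : Type*} {r : α → α → Prop} [Std.Irrefl r] :
    Disjoint {z : α × α | r z.1 z.2} (Set.diagonal α) :=
  Set.disjoint_left.2 fun z (hz : r z.1 z.2) (hdiag : z.1 = z.2) => irrefl z.2 (hdiag ▸ hz)

theorem measurePreserving_prodProdProdComm {α β γ δ : Type*} [MeasurableSpace α]
    [MeasurableSpace β] [MeasurableSpace γ] [MeasurableSpace δ] (μa : Measure α) (μb : Measure β)
    (μc : Measure γ) (μd : Measure δ) [SFinite μa] [SFinite μb] [SFinite μc] [SFinite μd] :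
    MeasurePreserving (Equiv.prodProdProdComm α β γ δ) ((μa.prod μb).prod (μc.prod μd))
      ((μa.prod μc).prod (μb.prod μd)) :=
  ((measurePreserving_prodAssoc μa μc (μb.prod μd)).symm _).comp <|
    ((MeasurePreserving.id μa).prod <| (measurePreserving_prodAssoc μc μb μd).comp <|
      ((Measure.measurePreserving_swap (μ := μb) (ν := μc)).prod (MeasurePreserving.id μd)).comp <|
        (measurePreserving_prodAssoc μb μc μd).symm _).comp <|
    measurePreserving_prodAssoc μa μb (μc.prod μd)

section MidSurvival

variable {α : Type*} [MeasurableSpace α]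

/-- The probability that `(a, u)` lexicographically precedes `(X, V)`, for `X ∼ ν` and independent
uniform `u`, `V`. -/
def midSurvival (ν : Measure α) (r : α → α → Prop) (a : α) : ℝ≥0∞ :=
  ν {b | r a b} + ν {a} / 2

variable {ν : Measure α} {r : α → α → Prop}

theorem midSurvival_add_le [MeasurableSingletonClass α] [IsStrictOrder α r] {a b : α}
    (hab : r a b) :
    midSurvival ν r b + ν {a} / 2 + ν {b} / 2 ≤ midSurvival ν r a := by
  have hsub : ν {c | r b c} + ν {b} ≤ ν {c | r a c} := by
    rw [← measure_union (s₁ := {c | r b c}) (Set.disjoint_singleton_right.2 (irrefl b))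
      (measurableSet_singleton b)]
    refine measure_mono (Set.union_subset (fun c hc => _root_.trans hab hc) ?_)
    simpa using hab
  calc midSurvival ν r b + ν {a} / 2 + ν {b} / 2
      = ν {c | r b c} + (ν {b} / 2 + ν {b} / 2) + ν {a} / 2 := by
        unfold midSurvival; ring
    _ ≤ ν {c | r a c} + ν {a} / 2 := by
        rw [ENNReal.add_halves]
        gcongr

theorem midSurvival_le_one [IsProbabilityMeasure ν] [MeasurableSingletonClass α] [Std.Irrefl r]
    (a : α) : midSurvival ν r a ≤ 1 :=
  calc midSurvival ν r a ≤ ν {b | r a b} + ν {a} := by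
        unfold midSurvival; gcongr; exact ENNReal.half_le_self
    _ = ν ({b | r a b} ∪ {a}) :=
        (measure_union (s₁ := {b | r a b}) (Set.disjoint_singleton_right.2 (irrefl a))
          (measurableSet_singleton a)).symm
    _ ≤ 1 := prob_le_one

theorem lintegral_midSurvival [MeasurableEq α] (μ : Measure α) [SFinite ν]
    (hr : MeasurableSet {z : α × α | r z.1 z.2}) :
    ∫⁻ a, midSurvival ν r a ∂μ = μ.prod ν {z | r z.1 z.2} + μ.prod ν (Set.diagonal α) / 2 := by
  simp_rw [midSurvival, div_eq_mul_inv]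
  rw [Measure.prod_apply hr, Measure.prod_apply measurableSet_diagonal,
    ← lintegral_mul_const _ (measurable_measure_prodMk_left measurableSet_diagonal),
    ← lintegral_add_left (measurable_measure_prodMk_left hr)]
  refine lintegral_congr fun a => ?_
  congr 3
  ext b
  exact eq_comm

end MidSurvival

theorem lintegral_midSurvival_self {α : Type*} [MeasurableSpace α] [MeasurableEq α]
    (ν : Measure α) [IsProbabilityMeasure ν] {r : α → α → Prop} [IsStrictTotalOrder α r]
    (hr : MeasurableSet {z : α × α | r z.1 z.2}) :
    ∫⁻ a, midSurvival ν r a ∂ν = 2⁻¹ := by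
  have htotal := prod_self_setOf_add_prod_self_setOf_not_swap ν hr
  have hsplit : {z : α × α | ¬ r z.2 z.1} = {z | r z.1 z.2} ∪ Set.diagonal α := by
    ext ⟨a, b⟩
    simp only [Set.mem_ofPred_eq, Set.mem_union, Set.mem_diagonal_iff]
    rcases trichotomous_of r a b with h | rfl | h
    · simp [h, asymm h]
    · simp [irrefl a]
    · simp [h, asymm h, ne_of_irrefl' h]
  rw [hsplit, measure_union disjoint_setOf_rel_diagonal measurableSet_diagonal] at htotal
  rw [lintegral_midSurvival ν hr]
  set x := ν.prod ν {z | r z.1 z.2}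
  set d := ν.prod ν (Set.diagonal α)
  calc x + d / 2 = (x + (x + d)) / 2 := by
        rw [ENNReal.add_div, ENNReal.add_div, ← add_assoc, ENNReal.add_halves]
    _ = 2⁻¹ := by rw [htotal, one_div]

section PMF

variable {T : Type*}

theorem PMF.summable_toReal (p : PMF T) : Summable fun a => (p a).toReal :=
  ENNReal.summable_toReal (by simp [p.tsum_coe])

theorem PMF.tsum_toReal (p : PMF T) : ∑' a, (p a).toReal = 1 := by
  rw [← ENNReal.tsum_toReal_eq p.apply_ne_top, p.tsum_coe, ENNReal.toReal_one]

theorem PMF.tsum_mul_le_one (p : PMF T) {f : T → ℝ≥0∞} (hf : ∀ a, f a ≤ 1) :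
    ∑' a, p a * f a ≤ 1 :=
  calc ∑' a, p a * f a ≤ ∑' a, p a := ENNReal.tsum_le_tsum fun a => mul_le_of_le_one_right' (hf a)
    _ = 1 := p.tsum_coe

theorem PMF.tsum_mul_lt_tsum_mul_of_separated {p q : PMF T} (hpq : p ≠ q)
    {f : T → ℝ≥0∞} (hf : ∀ a, f a ≤ 1)
    (hsep : ∀ a b, (p a).toReal < (q a).toReal → (q b).toReal < (p b).toReal →
      f b + p a / 2 + p b / 2 ≤ f a) :
    ∑' a, p a * f a < ∑' a, q a * f a := by
  have hfin : ∀ a, f a ≠ ∞ := fun a => ne_top_of_le_ne_top ENNReal.one_ne_top (hf a)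
  have htoReal : ∀ p : PMF T, (∑' a, p a * f a).toReal = ∑' a, (p a).toReal * (f a).toReal :=
    fun p => by
      rw [ENNReal.tsum_toReal_eq fun a => ENNReal.mul_ne_top (p.apply_ne_top a) (hfin a)]
      simp only [ENNReal.toReal_mul]
  rw [← ENNReal.toReal_lt_toReal (ne_top_of_le_ne_top ENNReal.one_ne_top (p.tsum_mul_le_one hf))
    (ne_top_of_le_ne_top ENNReal.one_ne_top (q.tsum_mul_le_one hf)), htoReal, htoReal]
  refine _root_.tsum_mul_lt_tsum_mul_of_separated (C := 1) p.summable_toReal q.summable_toReal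
    (fun _ => ENNReal.toReal_nonneg) (fun _ => ENNReal.toReal_nonneg)
    (by rw [p.tsum_toReal, q.tsum_toReal])
    (fun h => hpq <| PMF.ext fun a =>
      (ENNReal.toReal_eq_toReal_iff' (p.apply_ne_top a) (q.apply_ne_top a)).1 (congrFun h a))
    (fun a => by
      rw [abs_of_nonneg ENNReal.toReal_nonneg]
      exact ENNReal.toReal_le_of_le_ofReal zero_le_one (by simpa using hf a))
    fun a b ha hb => ?_
  have hhalf : ∀ c, p c / 2 ≠ ∞ := fun c => ENNReal.div_ne_top (p.apply_ne_top c) two_ne_zero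
  have hle := ENNReal.toReal_mono (hfin a) (hsep a b ha hb)
  rw [ENNReal.toReal_add (ENNReal.add_ne_top.2 ⟨hfin b, hhalf a⟩) (hhalf b),
    ENNReal.toReal_add (hfin b) (hhalf a)] at hle
  simp only [ENNReal.toReal_div, ENNReal.toReal_ofNat] at hle
  linarith

theorem PMF.lintegral_toMeasure_eq_tsum [Countable T] [MeasurableSpace T]
    [MeasurableSingletonClass T] (p : PMF T) (f : T → ℝ≥0∞) :
    ∫⁻ a, f a ∂p.toMeasure = ∑' a, p a * f a := by
  rw [lintegral_countable']
  exact tsum_congr fun a => by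
    rw [p.toMeasure_apply_singleton a (measurableSet_singleton a), mul_comm]

end PMF

instance : IsProbabilityMeasure unifIcc := ⟨by simp [unifIcc]⟩

instance : NullSingletonClass unifIcc := inferInstanceAs (NullSingletonClass (volume.restrict _))

theorem setOf_rankStat_one_eq_zero {T Ω : Type} (r : T → T → Prop) [IsStrictTotalOrder T r]
    (X : Fin (1 + 1) → Ω → T) (U : Fin (1 + 1) → Ω → ℝ) :
    {ω | rankStat r 1 X U ω = 0} = (fun ω => ((X 0 ω, X 1 ω), (U 0 ω, U 1 ω))) ⁻¹'
      ({z | r z.1 z.2} ×ˢ Set.univ ∪ Set.diagonal T ×ˢ {z | z.1 ≤ z.2}) := by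
  ext ω
  simp only [rankStat, Finset.univ_unique, Fin.default_eq_zero, Fin.isValue, Finset.sum_singleton,
    Fin.succ_zero_eq_one, Nat.add_eq_zero_iff, ite_eq_right_iff, one_ne_zero, imp_false, not_and,
    not_lt, Set.mem_ofPred_eq, Set.preimage_union, Set.mem_union, Set.mem_preimage, Set.mem_prod,
    Set.mem_univ, and_true, Set.mem_diagonal_iff]
  rcases trichotomous_of r (X 0 ω) (X 1 ω) with h | h | h
  · simp [h, asymm h, ne_of_irrefl' h]
  · simp [h, irrefl (X 1 ω)]
  · simp [h, asymm h, ne_of_irrefl' h]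

theorem IsRankSetup.map_eq_prod {T Ω : Type} [MeasurableSpace T] [MeasurableSpace Ω]
    {μ : Measure Ω} [IsProbabilityMeasure μ] {p q : Measure T} [SFinite p] [SFinite q]
    {X : Fin (1 + 1) → Ω → T} {U : Fin (1 + 1) → Ω → ℝ} (h : IsRankSetup μ p q 1 X U) :
    μ.map (fun ω => ((X 0 ω, X 1 ω), (U 0 ω, U 1 ω))) =
      (q.prod p).prod (unifIcc.prod unifIcc) := by
  obtain ⟨hX, hU, hindep, hlaw₀, hlaw⟩ := h
  have hV : ∀ i, Measurable fun ω => (X i ω, U i ω) := fun i => (hX i).prodMk (hU i)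
  have hjoint : μ.map (fun ω => ((X 0 ω, U 0 ω), (X 1 ω, U 1 ω))) =
      (q.prod unifIcc).prod (p.prod unifIcc) := by
    rw [(indepFun_iff_map_prod_eq_prod_map_map (hV 0).aemeasurable (hV 1).aemeasurable).1
      (hindep.indepFun zero_ne_one), hlaw₀, hlaw 1 one_ne_zero]
  have hcomm := measurePreserving_prodProdProdComm q unifIcc p unifIcc
  rw [← hcomm.map_eq, ← hjoint, Measure.map_map hcomm.measurable ((hV 0).prodMk (hV 1))]
  rfl

theorem IsRankSetup.measure_rankStat_eq_zero {T Ω : Type} [Countable T] [MeasurableSpace T]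
    [MeasurableSingletonClass T] [MeasurableSpace Ω] {μ : Measure Ω} [IsProbabilityMeasure μ]
    {p q : Measure T} [SFinite p] [SFinite q] {r : T → T → Prop} [IsStrictTotalOrder T r]
    {X : Fin (1 + 1) → Ω → T} {U : Fin (1 + 1) → Ω → ℝ} (h : IsRankSetup μ p q 1 X U) :
    μ {ω | rankStat r 1 X U ω = 0} = ∫⁻ a, midSurvival p r a ∂q := by
  have hr : MeasurableSet {z : T × T | r z.1 z.2} := (Set.to_countable _).measurableSet
  have hle : MeasurableSet {z : ℝ × ℝ | z.1 ≤ z.2} := measurableSet_le measurable_fst measurable_snd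
  have ⟨hX, hU, _⟩ := h
  have hpair : Measurable fun ω => ((X 0 ω, X 1 ω), (U 0 ω, U 1 ω)) :=
    ((hX 0).prodMk (hX 1)).prodMk ((hU 0).prodMk (hU 1))
  rw [setOf_rankStat_one_eq_zero,
    ← Measure.map_apply hpair ((hr.prod .univ).union (measurableSet_diagonal.prod hle)),
    h.map_eq_prod, measure_union (Set.disjoint_prod.2 (.inl disjoint_setOf_rel_diagonal))
      (measurableSet_diagonal.prod hle),
    Measure.prod_prod, Measure.prod_prod, measure_univ, prod_self_setOf_le_eq_half, mul_one,
    lintegral_midSurvival q hr, div_eq_mul_inv]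

theorem srs_prob_rank_zero_gt_half_general
    {T : Type} [Countable T] [MeasurableSpace T] [MeasurableSingletonClass T]
    (p q : PMF T) (hpq : p ≠ q)
    (r : T → T → Prop) (hr : IsStrictTotalOrder T r)
    (horder₁ : ∀ x x' : T,
      (q x).toReal - (p x).toReal > (q x').toReal - (p x').toReal → r x x') :
    ∀ (Ω : Type) (_ : MeasurableSpace Ω) (μ : Measure Ω), IsProbabilityMeasure μ →
      ∀ (X : Fin (1 + 1) → Ω → T) (U : Fin (1 + 1) → Ω → ℝ),
        IsRankSetup μ p.toMeasure q.toMeasure 1 X U →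
        2⁻¹ < μ {ω | rankStat r 1 X U ω = 0} := by
  intro Ω _ μ _ X U hX
  have hmeas : MeasurableSet {z : T × T | r z.1 z.2} := (Set.to_countable _).measurableSet
  rw [hX.measure_rankStat_eq_zero, ← lintegral_midSurvival_self p.toMeasure hmeas,
    p.lintegral_toMeasure_eq_tsum, q.lintegral_toMeasure_eq_tsum]
  refine PMF.tsum_mul_lt_tsum_mul_of_separated hpq (fun a => midSurvival_le_one a)
    fun a b ha hb => ?_
  have hab : r a b := horder₁ a b (by linarith)
  simpa only [p.toMeasure_apply_singleton _ (measurableSet_singleton _)] using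
    midSurvival_add_le (ν := p.toMeasure) hab

/-- **Theorem (an ordering that witnesses `p ≠ q` for `m = 1`).** Suppose `p ≠ q`, let
`h x := q x - p x`, and let `≺` be any strict total order on `T` such that
`h x > h x'` implies `x ≺ x'` (and `h x < h x'` implies `x' ≺ x`).  Then for `m = 1` the
stochastic rank statistic satisfies `P(R = 0) > 1/2`. -/
theorem srs_prob_rank_zero_gt_half
    {T : Type} [Countable T] [Nonempty T] [MeasurableSpace T] [MeasurableSingletonClass T]
    (p q : PMF T) (hpq : p ≠ q)
    (r : T → T → Prop) (hr : IsStrictTotalOrder T r)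
    (horder₁ : ∀ x x' : T,
      (q x).toReal - (p x).toReal > (q x').toReal - (p x').toReal → r x x')
    (horder₂ : ∀ x x' : T,
      (q x).toReal - (p x).toReal < (q x').toReal - (p x').toReal → r x' x) :
    ∀ (Ω : Type) (_ : MeasurableSpace Ω) (μ : Measure Ω), IsProbabilityMeasure μ →
      ∀ (X : Fin (1 + 1) → Ω → T) (U : Fin (1 + 1) → Ω → ℝ),
        IsRankSetup μ p.toMeasure q.toMeasure 1 X U →
        2⁻¹ < μ {ω | rankStat r 1 X U ω = 0} :=
  srs_prob_rank_zero_gt_half_general p q hpq r hr horder₁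

end
end
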